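/- arXiv:2208.11431 — 4 statements merged into one kernel-verified Lean document; each statement's English description precedes it below -/
import Mathlib

section
/- Let A be a commutative k-algebra and let a₁, …, aₙ ∈ A be elements that are algebraically independent over k. Then there exists a prime ideal 𝔭 ⊂ A such that the images of a₁, …, aₙ in A/𝔭 are still algebraically independent over k. -/
open MvPolynomial

theorem algebraicIndependent_quotient_mk_iff {ι R A : Type*} [CommRing R] [CommRing A]
    [Algebra R A] (x : ι → A) (I : Ideal A) :
    AlgebraicIndependent R (fun i => Ideal.Quotient.mk I (x i)) ↔
      I.comap (aeval x : MvPolynomial ι R →ₐ[R] A) = ⊥ := by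
  rw [algebraicIndependent_iff_injective_aeval, ← Ideal.Quotient.mkₐ_eq_mk R, ← comp_aeval,
    ← AlgHom.coe_toRingHom, RingHom.injective_iff_ker_eq_bot, RingHom.ker_coe_toRingHom,
    ← AlgHom.comap_ker, ← RingHom.ker_coe_toRingHom, Ideal.Quotient.mkₐ_ker]

/-- Since `MvPolynomial ι R` is a domain, `⊥` is one of its minimal primes, and minimal primes
lie under primes along the injective map `aeval x`. -/
theorem AlgebraicIndependent.exists_isPrime_algebraicIndependent_quotient {ι R A : Type*}
    [CommRing R] [IsDomain R] [CommRing A] [Algebra R A] {x : ι → A}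
    (hx : AlgebraicIndependent R x) :
    ∃ 𝔭 : Ideal A, 𝔭.IsPrime ∧ AlgebraicIndependent R (fun i => Ideal.Quotient.mk 𝔭 (x i)) := by
  obtain ⟨𝔭, h𝔭, hcomap⟩ := Ideal.exists_comap_eq_of_mem_minimalPrimes_of_injective
    (f := (aeval x : MvPolynomial ι R →ₐ[R] A).toRingHom) hx ⊥
    (by simp [IsDomain.minimalPrimes_eq_singleton_bot])
  exact ⟨𝔭, h𝔭, (algebraicIndependent_quotient_mk_iff x 𝔭).2 hcomap⟩

/-- Let `A` be a commutative `k`-algebra and `a₁, …, aₙ ∈ A` elements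
algebraically independent over `k`. Then there exists a prime ideal `𝔭 ⊂ A` such that
the images of the `aᵢ` in `A ⧸ 𝔭` are still algebraically independent over `k`. -/
theorem exists_prime_algebraicIndependent_quotient
    (k A : Type*) [Field k] [CommRing A] [Algebra k A]
    (n : ℕ) (a : Fin n → A) (ha : AlgebraicIndependent k a) :
    ∃ 𝔭 : Ideal A, 𝔭.IsPrime ∧
      AlgebraicIndependent k (fun i => Ideal.Quotient.mk 𝔭 (a i)) :=
  ha.exists_isPrime_algebraicIndependent_quotient
end

section
/- Let k be a field of characteristic zero and K/k a field extension. For x ∈ K, the Kähler differential dx = 0 in Ω¹_{K|k} if and only if x is algebraic over k. -/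
/-!
If `x` is algebraic over `k` it is separable (characteristic zero), so differentiating its minimal
polynomial `f` gives `f'(x) dx = 0` with `f'(x) ≠ 0`. If `x` is transcendental, extend `{x}` to a
transcendence basis `s`: then `K` is formally étale over the polynomial ring `k[s]` (a localization
followed by a separable algebraic extension), so `∂/∂x` on `k[s]` extends to a `k`-derivation of `K`,
which does not vanish at `x`.
-/

open KaehlerDifferential

theorem Derivation.map_eq_zero_of_isSeparable {R A M : Type*} [CommRing R] [Field A] [Algebra R A]
    [AddCommGroup M] [Module A M] [Module R M] [IsScalarTower R A M] (D : Derivation R A M) {x : A}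
    (hx : IsSeparable R x) : D x = 0 := by
  have h := D.map_aeval (minpoly R x) x
  rw [minpoly.aeval, map_zero] at h
  exact (smul_eq_zero.mp h.symm).resolve_left (hx.aeval_derivative_ne_zero (minpoly.aeval R x))

theorem Derivation.exists_extend_of_formallyEtale {R S T M : Type*} [CommRing R] [CommRing S]
    [CommRing T] [Algebra R S] [Algebra R T] [Algebra S T] [IsScalarTower R S T]
    [Algebra.FormallyEtale S T] [AddCommGroup M] [Module T M] [Module S M] [IsScalarTower S T M]
    [Module R M] [IsScalarTower R S M] [IsScalarTower R T M] (d : Derivation R S M) :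
    ∃ D : Derivation R T M, ∀ s, D (algebraMap S T s) = d s := by
  let φ : Ω[T⁄R] →ₗ[T] M := d.liftKaehlerDifferential.liftBaseChange T ∘ₗ
    (tensorKaehlerEquivOfFormallyEtale R S T).symm.toLinearMap
  refine ⟨φ.compDer (D R T), fun s => ?_⟩
  simp [φ, tensorKaehlerEquivOfFormallyEtale_symm_D_algebraMap]

def Derivation.mapAlgEquiv {R A B : Type*} [CommRing R] [CommRing A] [CommRing B] [Algebra R A]
    [Algebra R B] (e : A ≃ₐ[R] B) (d : Derivation R A A) : Derivation R B B where
  toLinearMap := e.toLinearMap ∘ₗ d.toLinearMap ∘ₗ e.symm.toLinearMap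
  map_one_eq_zero' := by simp
  leibniz' a b := by simp [d.leibniz]

open scoped IntermediateField.algebraAdjoinAdjoin in
theorem IsTranscendenceBasis.formallyEtale_adjoin {ι k K : Type*} [Field k] [CharZero k] [Field K]
    [Algebra k K] {v : ι → K} (hv : IsTranscendenceBasis k v) :
    Algebra.FormallyEtale (Algebra.adjoin k (Set.range v)) K := by
  let L := IntermediateField.adjoin k (Set.range v)
  have : Algebra.FormallyEtale (Algebra.adjoin k (Set.range v)) L :=
    .of_isLocalization (nonZeroDivisors _)
  have := hv.isAlgebraic_field
  have : Algebra.FormallyEtale L K := .of_isSeparable L K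
  exact .comp _ L K

theorem KaehlerDifferential.D_ne_zero_of_transcendental {k K : Type*} [Field k] [CharZero k]
    [Field K] [Algebra k K] {x : K} (hx : Transcendental k x) : D k K x ≠ 0 := by
  obtain ⟨s, hxs, hs⟩ := exists_isTranscendenceBasis_superset
    (algebraicIndependent_unique_type_iff.mpr hx : AlgebraicIndepOn k id {x})
  have := hs.formallyEtale_adjoin
  let d := (MvPolynomial.pderiv (⟨x, hxs rfl⟩ : s)).mapAlgEquiv hs.1.aevalEquiv
  obtain ⟨δ, hδ⟩ := ((Algebra.linearMap _ K).compDer d).exists_extend_of_formallyEtale (T := K)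
  have hδx : δ x = 1 := by
    simpa [d, Derivation.mapAlgEquiv] using hδ (hs.1.aevalEquiv (MvPolynomial.X ⟨x, hxs rfl⟩))
  intro h
  have hδ0 := δ.liftKaehlerDifferential_comp_D x
  rw [h, map_zero, hδx] at hδ0
  exact zero_ne_one hδ0

/-- Let `k` be a field of characteristic zero and `K/k` a field
extension. For `x ∈ K`, the Kähler differential `dx` vanishes in `Ω¹_{K|k}` if and only
if `x` is algebraic over `k`. -/
theorem kaehler_D_eq_zero_iff_isAlgebraic
    (k K : Type*) [Field k] [CharZero k] [Field K] [Algebra k K] (x : K) :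
    KaehlerDifferential.D k K x = 0 ↔ IsAlgebraic k x := by
  refine ⟨fun h => ?_, fun hx => ?_⟩
  · by_contra hx
    exact D_ne_zero_of_transcendental hx h
  · exact (D k K).map_eq_zero_of_isSeparable (minpoly.irreducible hx.isIntegral).separable
end

section
/- Let λ₁, …, λₙ be real numbers linearly independent over ℚ. Then the real-valued functions aᵢ(t) = e^{λᵢ t} on ℝ are algebraically independent over ℝ. -/
noncomputable def expHom (c : ℝ) : Multiplicative ℝ →* ℝ where
  toFun t := Real.exp (c * t.toAdd)
  map_one' := by simp
  map_mul' s t := by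
    simp [toAdd_mul, mul_add, Real.exp_add]

lemma expHom_injective : Function.Injective expHom := by
  intro c c' h
  have := congrArg (fun f => f (Multiplicative.ofAdd 1)) h
  simpa [expHom, Real.exp_eq_exp] using this

lemma exp_linearIndependent :
    LinearIndependent ℝ (fun c : ℝ => (fun t : ℝ => Real.exp (c * t))) := by
  have h := (linearIndependent_monoidHom (Multiplicative ℝ) ℝ).comp expHom expHom_injective
  exact h

/-- Let `λ₁, …, λₙ` be real numbers linearly independent over `ℚ`.
Then the functions `aᵢ(t) = e^{λᵢ t}`, viewed as elements of the ℝ-algebra of functions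
`ℝ → ℝ`, are algebraically independent over `ℝ`. -/
theorem exp_algebraicIndependent
    (n : ℕ) (lam : Fin n → ℝ) (hlam : LinearIndependent ℚ lam) :
    AlgebraicIndependent ℝ (fun i : Fin n => (fun t : ℝ => Real.exp (lam i * t))) := by
  set μ : (Fin n →₀ ℕ) → ℝ := fun m => ∑ i, (m i : ℝ) * lam i with hμ
  have hμinj : Function.Injective μ := by
    intro m m' h
    have hlam' := Fintype.linearIndependent_iff.mp hlam
    have hz : ∀ i, ((m i : ℚ) - (m' i : ℚ)) = 0 := by
      apply hlam' (fun i => (m i : ℚ) - (m' i : ℚ))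
      have : ∑ i, (((m i : ℚ) - (m' i : ℚ)) • lam i)
          = μ m - μ m' := by
        simp [hμ, sub_smul, Finset.sum_sub_distrib, Rat.smul_def]
      rw [this, h, sub_self]
    ext i
    have := hz i
    exact_mod_cast sub_eq_zero.mp (by linarith [this] : (m i : ℚ) - (m' i : ℚ) = 0)
  have hli : LinearIndependent ℝ (fun m : Fin n →₀ ℕ => (fun t : ℝ => Real.exp (μ m * t))) :=
    exp_linearIndependent.comp μ hμinj
  rw [AlgebraicIndependent]
  rw [injective_iff_map_eq_zero]
  intro p hp
  have key : ∀ d ∈ p.support, MvPolynomial.coeff d p = 0 := by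
    apply linearIndependent_iff'.mp hli p.support (fun d => MvPolynomial.coeff d p)
    funext t
    have ht := congrFun hp t
    have : (MvPolynomial.aeval (fun i : Fin n => (fun t : ℝ => Real.exp (lam i * t))) p) t
        = MvPolynomial.eval (fun i => Real.exp (lam i * t)) p := by
      rw [show (MvPolynomial.aeval (fun i : Fin n => (fun t : ℝ => Real.exp (lam i * t))) p) t
          = (Pi.evalAlgHom ℝ (fun _ : ℝ => ℝ) t).comp
              (MvPolynomial.aeval (fun i : Fin n => (fun t : ℝ => Real.exp (lam i * t)))) p from rfl,
        MvPolynomial.comp_aeval]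
      exact RingHom.congr_fun (MvPolynomial.coe_aeval_eq_eval _) p
    rw [this] at ht
    rw [MvPolynomial.eval_eq'] at ht
    have hexp : ∀ d : Fin n →₀ ℕ, (∏ i, Real.exp (lam i * t) ^ d i) = Real.exp (μ d * t) := by
      intro d
      have h1 : ∀ i : Fin n, Real.exp (lam i * t) ^ d i = Real.exp ((d i : ℝ) * lam i * t) := by
        intro i
        rw [← Real.exp_nat_mul]; ring_nf
      rw [Finset.prod_congr rfl fun i _ => h1 i, ← Real.exp_sum, hμ, Finset.sum_mul]
    simp only [Finset.sum_apply, Pi.smul_apply, smul_eq_mul, Pi.zero_apply]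
    rw [show (0 : ℝ) = (0 : ℝ → ℝ) t from rfl, ← ht]
    apply Finset.sum_congr rfl
    intro d _
    rw [hexp d]
  ext d
  by_cases hd : d ∈ p.support
  · simp [key d hd]
  · simp [MvPolynomial.notMem_support_iff.mp hd]
end

section
/- Let k be a field of characteristic 0, F a field containing k and L/F a finite field extension. Then the composition Ω^n_{F|k} → Ω^n_{L|k} → Ω^n_{F|k}, where the second map is the trace map Σ (which is Ω^•_{F|k}-linear and restricts to the field trace in degree 0), equals multiplication by [L : F]; consequently the first map is injective on cohomology. -/
set_option synthInstance.maxHeartbeats 1000000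
set_option maxHeartbeats 1000000

/-- The degree-`n` graded piece of the algebraic de Rham algebra of `A` over `k`,
realized inside the exterior algebra of the module of Kähler differentials. -/
noncomputable abbrev deRhamGrade (k A : Type*) [CommRing k] [CommRing A] [Algebra k A]
    (n : ℕ) : Submodule A (ExteriorAlgebra A (Ω[A⁄k])) :=
  LinearMap.range (ExteriorAlgebra.ι A : Ω[A⁄k] →ₗ[A] ExteriorAlgebra A (Ω[A⁄k])) ^ n

/-- The algebraic de Rham complex of a commutative `k`-algebra `A`: the exterior algebra
of `Ω¹_{A|k}` over `A`, together with the (unique) de Rham differential `d`, i.e. a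
`k`-linear, grade-raising, square-zero operator extending the universal derivation and
satisfying the graded Leibniz rule. -/
structure DeRhamData (k A : Type*) [CommRing k] [CommRing A] [Algebra k A] where
  d : ExteriorAlgebra A (Ω[A⁄k]) →+ ExteriorAlgebra A (Ω[A⁄k])
  smul_comm : ∀ (c : k) (x : ExteriorAlgebra A (Ω[A⁄k])),
    d (algebraMap k A c • x) = algebraMap k A c • d x
  d_grade : ∀ (n : ℕ), ∀ x ∈ deRhamGrade k A n, d x ∈ deRhamGrade k A (n + 1)
  d_d : ∀ x, d (d x) = 0
  d_algebraMap : ∀ a : A,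
    d (algebraMap A (ExteriorAlgebra A (Ω[A⁄k])) a) =
      ExteriorAlgebra.ι A (KaehlerDifferential.D k A a)
  leibniz : ∀ (n : ℕ) (x y : ExteriorAlgebra A (Ω[A⁄k])), x ∈ deRhamGrade k A n →
    d (x * y) = d x * y + ((-1 : ℤ) ^ n) • (x * d y)
/-- A morphism of algebraic de Rham complexes lying over an algebra homomorphism
`φ : A →ₐ[k] B`: a ring homomorphism of the exterior algebras which extends `φ` in
degree `0`, preserves the grading and commutes with the de Rham differentials.
(Such a morphism is unique: it is the canonical map induced by `φ`.) -/
structure DeRhamHom (k A B : Type*) [CommRing k] [CommRing A] [CommRing B]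
    [Algebra k A] [Algebra k B] (φ : A →ₐ[k] B)
    (DA : DeRhamData k A) (DB : DeRhamData k B) where
  toRingHom : ExteriorAlgebra A (Ω[A⁄k]) →+* ExteriorAlgebra B (Ω[B⁄k])
  map_algebraMap : ∀ a : A,
    toRingHom (algebraMap A (ExteriorAlgebra A (Ω[A⁄k])) a) =
      algebraMap B (ExteriorAlgebra B (Ω[B⁄k])) (φ a)
  map_grade : ∀ (n : ℕ), ∀ x ∈ deRhamGrade k A n, toRingHom x ∈ deRhamGrade k B n
  map_d : ∀ x, toRingHom (DA.d x) = DB.d (toRingHom x)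
/-- Let `k` be a field of characteristic zero, `F` a field containing
`k` and `L/F` a finite field extension. Let `Σ : Ω^•_{L|k} → Ω^•_{F|k}` be the trace
morphism of complexes: `Ω^•_{F|k}`-linear, grade-preserving, commuting with `d`, and
equal to the field trace in degree `0`. Then the composition
`Ω^n_{F|k} → Ω^n_{L|k} → Ω^n_{F|k}` is multiplication by `[L : F]`; consequently the
induced map on de Rham cohomology is injective. -/
theorem trace_comp_map_eq_degree_smul
    (k F L : Type*) [Field k] [CharZero k] [Field F] [Field L]
    [Algebra k F] [Algebra F L] [Algebra k L] [IsScalarTower k F L]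
    [FiniteDimensional F L]
    (DF : DeRhamData k F) (DL : DeRhamData k L)
    (Φ : DeRhamHom k F L (IsScalarTower.toAlgHom k F L) DF DL)
    (T : ExteriorAlgebra L (Ω[L⁄k]) →+ ExteriorAlgebra F (Ω[F⁄k]))
    (hT_grade : ∀ (n : ℕ), ∀ x ∈ deRhamGrade k L n, T x ∈ deRhamGrade k F n)
    (hT_d : ∀ x, T (DL.d x) = DF.d (T x))
    (hT_linear : ∀ (y : ExteriorAlgebra F (Ω[F⁄k])) (x : ExteriorAlgebra L (Ω[L⁄k])),
      T (Φ.toRingHom y * x) = y * T x)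
    (hT_zero : ∀ c : L,
      T (algebraMap L (ExteriorAlgebra L (Ω[L⁄k])) c) =
        algebraMap F (ExteriorAlgebra F (Ω[F⁄k])) (Algebra.trace F L c)) :
    (∀ x : ExteriorAlgebra F (Ω[F⁄k]),
        T (Φ.toRingHom x) = (Module.finrank F L) • x) ∧
    (∀ (n : ℕ), ∀ ω ∈ deRhamGrade k F n, DF.d ω = 0 →
      (∃ η ∈ deRhamGrade k L (n - 1), DL.d η = Φ.toRingHom ω) →
      ∃ η' ∈ deRhamGrade k F (n - 1), DF.d η' = ω) := by
  have hT1 : T 1 = algebraMap F (ExteriorAlgebra F (Ω[F⁄k])) (Module.finrank F L : F) := by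
    have h := hT_zero (algebraMap F L 1)
    rw [Algebra.trace_algebraMap] at h
    simpa using h
  have part1 : ∀ x : ExteriorAlgebra F (Ω[F⁄k]),
      T (Φ.toRingHom x) = (Module.finrank F L) • x := by
    intro x
    have h := hT_linear x 1
    rw [mul_one] at h
    rw [h, hT1, ← Algebra.commutes, ← Algebra.smul_def, Nat.cast_smul_eq_nsmul]
  refine ⟨part1, ?_⟩
  rintro n ω hω hdω ⟨η, hη, hdη⟩
  have hn0 : (Module.finrank F L : k) ≠ 0 :=
    Nat.cast_ne_zero.mpr Module.finrank_pos.ne'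
  refine ⟨algebraMap k F ((Module.finrank F L : k)⁻¹) • T η,
    Submodule.smul_mem _ _ (hT_grade _ η hη), ?_⟩
  rw [DF.smul_comm, ← hT_d, hdη, part1, ← Nat.cast_smul_eq_nsmul F,
    show ((Module.finrank F L : F)) = algebraMap k F (Module.finrank F L : k) by
      simp [map_natCast]]
  rw [smul_smul, ← map_mul, inv_mul_cancel₀ hn0, map_one, one_smul]
end
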